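/- Each of the three critical points (φ, φ), (ψ, ψ), (−1, −1) of F (where φ = (1 + √5)/2 and ψ = (1 − √5)/2) is non-degenerate: at each of these points the Hessian determinant (∂²F/∂u²)(∂²F/∂v²) − (∂²F/∂u∂v)² is nonzero. -/

import Mathlib

/-!
For fixed `v ≠ 0` the slice `u ↦ F(u, v)` is a Laurent trinomial `a + b u + c u⁻¹`, and `F` is
symmetric, so all second partials are explicit. Clearing denominators, the Hessian determinant
factors as `(u + v + 1)² (3 + 2(u + v) - (u - v)²) / (uv)⁴`, which on the diagonal is
`(2t + 1)² (4t + 3) / t⁸`. Neither `-1/2` nor `-3/4` is `-1` or a root of `t² = t + 1`.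
-/

open Complex

/-- The Pascaleff–Tonkonog potential function of the monotone Lagrangian torus in the
monotone blow-up of `ℂP²` at four points (Novikov parameter `T` normalized to `1`). -/
noncomputable def PTpotential (u v : ℂ) : ℂ :=
  (1 + u + v) * (1 + u⁻¹) * (1 + v⁻¹) - 3

/-- The golden ratio `(1 + √5)/2` as a complex number. -/
noncomputable def goldenφ : ℂ := (1 + (Real.sqrt 5 : ℂ)) / 2

/-- The conjugate golden ratio `(1 - √5)/2` as a complex number. -/
noncomputable def goldenψ : ℂ := (1 - (Real.sqrt 5 : ℂ)) / 2

/-- Second partial derivative `∂²F/∂u²` at `(u, v)`. -/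
noncomputable def Fuu (u v : ℂ) : ℂ :=
  deriv (fun x => deriv (fun x' => PTpotential x' v) x) u

/-- Second partial derivative `∂²F/∂v²` at `(u, v)`. -/
noncomputable def Fvv (u v : ℂ) : ℂ :=
  deriv (fun y => deriv (fun y' => PTpotential u y') y) v

/-- Mixed second partial derivative `∂²F/∂u∂v` at `(u, v)`. -/
noncomputable def Fuv (u v : ℂ) : ℂ :=
  deriv (fun x => deriv (fun y => PTpotential x y) v) u

/-- The Hessian determinant `(∂²F/∂u²)(∂²F/∂v²) - (∂²F/∂u∂v)²` at `(u, v)`. -/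
noncomputable def hessDet (u v : ℂ) : ℂ :=
  Fuu u v * Fvv u v - (Fuv u v) ^ 2

open Topology

section LaurentTrinomial

variable {𝕜 : Type*} [NontriviallyNormedField 𝕜]

theorem hasDerivAt_const_add_mul_add_mul_inv (a b c : 𝕜) {x : 𝕜} (hx : x ≠ 0) :
    HasDerivAt (fun y => a + b * y + c * y⁻¹) (b - c * (x ^ 2)⁻¹) x := by
  rw [show b - c * (x ^ 2)⁻¹ = b * 1 + c * -(x ^ 2)⁻¹ by ring]
  exact (((hasDerivAt_id x).const_mul b).const_add a).add ((hasDerivAt_inv hx).const_mul c)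

theorem deriv_deriv_const_add_mul_add_mul_inv (a b c : 𝕜) {x : 𝕜} (hx : x ≠ 0) :
    deriv (deriv fun y => a + b * y + c * y⁻¹) x = 2 * c * (x ^ 3)⁻¹ := by
  have hderiv : deriv (fun y => a + b * y + c * y⁻¹) =ᶠ[𝓝 x] fun y => b + (-c) * y⁻¹ ^ 2 := by
    filter_upwards [isOpen_ne.mem_nhds hx] with y hy
    rw [(hasDerivAt_const_add_mul_add_mul_inv a b c hy).deriv]
    ring
  rw [hderiv.deriv_eq, ((((hasDerivAt_inv hx).fun_pow 2).const_mul (-c)).const_add b).deriv]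
  norm_num
  ring

end LaurentTrinomial

theorem PTpotential_comm (u v : ℂ) : PTpotential u v = PTpotential v u := by
  unfold PTpotential
  ring

theorem PTpotential_eventuallyEq_laurent {u v : ℂ} (hu : u ≠ 0) (hv : v ≠ 0) :
    (fun x => PTpotential x v) =ᶠ[𝓝 u]
      fun x => (v + 2 * v⁻¹) + (1 + v⁻¹) * x + (2 + v + v⁻¹) * x⁻¹ := by
  filter_upwards [isOpen_ne.mem_nhds hu] with x hx
  unfold PTpotential
  field_simp
  ring

theorem Fuu_eq {u v : ℂ} (hu : u ≠ 0) (hv : v ≠ 0) :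
    Fuu u v = 2 * (2 + v + v⁻¹) * (u ^ 3)⁻¹ := by
  rw [Fuu, (PTpotential_eventuallyEq_laurent hu hv).deriv.deriv_eq,
    deriv_deriv_const_add_mul_add_mul_inv _ _ _ hu]

theorem Fvv_eq {u v : ℂ} (hu : u ≠ 0) (hv : v ≠ 0) :
    Fvv u v = 2 * (2 + u + u⁻¹) * (v ^ 3)⁻¹ := by
  simp only [Fvv, PTpotential_comm u]
  exact Fuu_eq hv hu

theorem Fuv_eq {u v : ℂ} (hu : u ≠ 0) (hv : v ≠ 0) :
    Fuv u v = -(u ^ 2)⁻¹ - (v ^ 2)⁻¹ + (u ^ 2)⁻¹ * (v ^ 2)⁻¹ := by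
  have hinner : (fun x => deriv (fun y => PTpotential x y) v) =ᶠ[𝓝 u]
      fun x => (1 - 2 * (v ^ 2)⁻¹) + (-(v ^ 2)⁻¹) * x + (1 - (v ^ 2)⁻¹) * x⁻¹ := by
    filter_upwards [isOpen_ne.mem_nhds hu] with x hx
    simp only [PTpotential_comm x]
    rw [(PTpotential_eventuallyEq_laurent hv hx).deriv_eq,
      (hasDerivAt_const_add_mul_add_mul_inv _ _ _ hv).deriv]
    field_simp
    ring
  rw [Fuv, hinner.deriv_eq, (hasDerivAt_const_add_mul_add_mul_inv _ _ _ hu).deriv]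
  ring

theorem hessDet_eq {u v : ℂ} (hu : u ≠ 0) (hv : v ≠ 0) :
    hessDet u v = (u + v + 1) ^ 2 * (3 + 2 * (u + v) - (u - v) ^ 2) / (u * v) ^ 4 := by
  rw [hessDet, Fuu_eq hu hv, Fvv_eq hu hv, Fuv_eq hu hv]
  field_simp
  ring

theorem hessDet_diag_ne_zero {t : ℂ} (h0 : t ≠ 0) (h1 : 2 * t + 1 ≠ 0) (h2 : 4 * t + 3 ≠ 0) :
    hessDet t t ≠ 0 := by
  rw [hessDet_eq h0 h0, show (t + t + 1) ^ 2 * (3 + 2 * (t + t) - (t - t) ^ 2)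
    = (2 * t + 1) ^ 2 * (4 * t + 3) by ring]
  exact div_ne_zero (mul_ne_zero (pow_ne_zero 2 h1) h2) (pow_ne_zero 4 (mul_ne_zero h0 h0))

theorem hessDet_diag_ne_zero_of_sq_eq_add_one {t : ℂ} (ht : t ^ 2 = t + 1) :
    hessDet t t ≠ 0 := by
  refine hessDet_diag_ne_zero ?_ ?_ ?_ <;> intro h
  · have : (-1 : ℂ) = 0 := by linear_combination (1 - t) * h + ht
    norm_num at this
  · have : (-1 : ℂ) = 0 := by linear_combination (3 - 2 * t) * h + 4 * ht
    norm_num at this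
  · have : (5 : ℂ) = 0 := by linear_combination (7 - 4 * t) * h + 16 * ht
    norm_num at this

theorem ofReal_sqrt_five_sq : ((Real.sqrt 5 : ℝ) : ℂ) ^ 2 = 5 := by
  rw [← ofReal_pow, Real.sq_sqrt (by norm_num)]
  norm_num

theorem goldenφ_sq : goldenφ ^ 2 = goldenφ + 1 := by
  unfold goldenφ
  linear_combination ofReal_sqrt_five_sq / 4

theorem goldenψ_sq : goldenψ ^ 2 = goldenψ + 1 := by
  unfold goldenψ
  linear_combination ofReal_sqrt_five_sq / 4

/-- Each of the three critical points `(φ, φ)`, `(ψ, ψ)`, `(-1, -1)` of `F` is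
non-degenerate: the Hessian determinant is nonzero there. -/
theorem critical_points_of_PTpotential_nondegenerate :
    hessDet goldenφ goldenφ ≠ 0 ∧ hessDet goldenψ goldenψ ≠ 0 ∧ hessDet (-1) (-1) ≠ 0 :=
  ⟨hessDet_diag_ne_zero_of_sq_eq_add_one goldenφ_sq,
    hessDet_diag_ne_zero_of_sq_eq_add_one goldenψ_sq,
    hessDet_diag_ne_zero (by norm_num) (by norm_num) (by norm_num)⟩
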